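/- arXiv:1705.07141 — 5 statements merged into one kernel-verified Lean document; each statement's English description precedes it below -/
import Mathlib

section
/- Let C be a monoidal category equipped with a commutor σ, with local rules τ. Then for all objects A, B, C, D, the morphism τ^A_{B,C⊗D} factors through the local rules τ^A_{B,C} and τ^{A⊗C}_{B,D}: precisely, (α_{A,C,D} ⊗ 1_B) ∘ τ^{A⊗C}_{B,D} ∘ (τ^A_{B,C} ⊗ 1_D) = τ^A_{B,C⊗D} ∘ α_{A⊗B,C,D} as morphisms ((A⊗B)⊗C)⊗D ⟶ (A⊗(C⊗D))⊗B. -/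
open CategoryTheory MonoidalCategory

universe v u

/-- A commutor on a monoidal category: a natural family of isomorphisms
`σ_{A,B} : A ⊗ B ⟶ B ⊗ A` satisfying the unit, symmetry and coboundary axioms.
A monoidal category with a commutor is a coboundary category. -/
structure Commutor (V : Type u) [Category.{v} V] [MonoidalCategory V] where
  σ : ∀ A B : V, A ⊗ B ⟶ B ⊗ A
  naturality : ∀ {A A' B B' : V} (f : A ⟶ A') (g : B ⟶ B'),
    (f ⊗ₘ g) ≫ σ A' B' = σ A B ≫ (g ⊗ₘ f)
  unit_right : ∀ A : V, σ A (𝟙_ V) = (ρ_ A).hom ≫ (λ_ A).inv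
  unit_left : ∀ B : V, σ (𝟙_ V) B = (λ_ B).hom ≫ (ρ_ B).inv
  symmetry : ∀ A B : V, σ A B ≫ σ B A = 𝟙 (A ⊗ B)
  coboundary : ∀ A B C : V,
    (α_ A B C).hom ≫ (𝟙 A ⊗ₘ σ B C) ≫ σ A (C ⊗ B) ≫ (α_ C B A).hom =
      (σ A B ⊗ₘ 𝟙 C) ≫ σ (B ⊗ A) C

/-- The local rule `τ^A_{B,C} : (A⊗B)⊗C ⟶ (A⊗C)⊗B`. -/
def localRule {V : Type u} [Category.{v} V] [MonoidalCategory V] (c : Commutor V)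
    (A B C : V) : (A ⊗ B) ⊗ C ⟶ (A ⊗ C) ⊗ B :=
  (c.σ A B ⊗ₘ 𝟙 C) ≫ (α_ B A C).hom ≫ c.σ B (A ⊗ C)

namespace Commutor

variable {V : Type u} [Category.{v} V] [MonoidalCategory V] (c : Commutor V)

theorem symmetry_whiskerRight_assoc (A B X : V) {Y : V} (f : (A ⊗ B) ⊗ X ⟶ Y) :
    c.σ A B ▷ X ≫ c.σ B A ▷ X ≫ f = f := by
  rw [← comp_whiskerRight_assoc, c.symmetry, id_whiskerRight, Category.id_comp]

theorem σ_naturality_right (B : V) {X Y : V} (f : X ⟶ Y) :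
    B ◁ f ≫ c.σ B Y = c.σ B X ≫ f ▷ B := by
  simpa using c.naturality (𝟙 B) f

end Commutor

/-- `τ^A_{B,C⊗D}` factors through `τ^A_{B,C}` and `τ^{A⊗C}_{B,D}`:
`(α_{A,C,D} ⊗ 1_B) ∘ τ^{A⊗C}_{B,D} ∘ (τ^A_{B,C} ⊗ 1_D) = τ^A_{B,C⊗D} ∘ α_{A⊗B,C,D}`. -/
theorem localRule_tensor_right {V : Type u} [Category.{v} V] [MonoidalCategory V]
    (c : Commutor V) (A B C D : V) :
    (localRule c A B C ⊗ₘ 𝟙 D) ≫ localRule c (A ⊗ C) B D ≫ ((α_ A C D).hom ⊗ₘ 𝟙 B) =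
      (α_ (A ⊗ B) C D).hom ≫ localRule c A B (C ⊗ D) := by
  -- The two middle commutors cancel by symmetry and the last one absorbs `α_ A C D` by
  -- naturality; what remains is the pentagon and naturality of the associator.
  simp only [localRule, tensorHom_id, comp_whiskerRight, Category.assoc,
    c.symmetry_whiskerRight_assoc, ← c.σ_naturality_right]
  monoidal
end

section
/- Let C be a monoidal category equipped with a commutor σ, with local rules τ. Then for all objects A, B, C, D, the morphism τ^A_{B⊗C,D} factors through the local rules τ^{A⊗B}_{C,D} and τ^A_{B,D}: precisely, α_{A⊗D,B,C} ∘ (τ^A_{B,D} ⊗ 1_C) ∘ τ^{A⊗B}_{C,D} = τ^A_{B⊗C,D} ∘ (α_{A,B,C} ⊗ 1_D) as morphisms ((A⊗B)⊗C)⊗D ⟶ (A⊗D)⊗(B⊗C). -/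
open CategoryTheory MonoidalCategory

universe v u

/-! Expand the local rules. Naturality of σ moves `τ^A_{B,D} ▷ C` to the left of `σ_{C,(A⊗B)⊗D}`,
and the coboundary axiom (in the form `σ_tensor_comp_associator`) turns `σ_{C,(A⊗D)⊗B} ≫ α` into a
composite ending in `σ_{B⊗C,A⊗D}`, so that the commutors `σ_{B,A⊗D}` and `σ_{A⊗D,B}` cancel.
Coherence gathers what precedes `σ_{B⊗C,A⊗D}` into a single morphism whiskered by `D`, and the
coboundary axiom again identifies that morphism with `α_{A,B,C} ≫ σ_{A,B⊗C}`. -/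

namespace Commutor

variable {V : Type u} [Category.{v} V] [MonoidalCategory V] (c : Commutor V)

lemma σ_comp_σ_assoc (A B : V) {X : V} (f : A ⊗ B ⟶ X) : c.σ A B ≫ c.σ B A ≫ f = f := by
  rw [← Category.assoc, c.symmetry, Category.id_comp]

lemma whiskerLeft_comp_σ (X : V) {Y Y' : V} (g : Y ⟶ Y') :
    X ◁ g ≫ c.σ X Y' = c.σ X Y ≫ g ▷ X := by
  simpa only [id_tensorHom, tensorHom_id] using c.naturality (𝟙 X) g

lemma coboundary_whisker (A B C : V) :
    (α_ A B C).hom ≫ A ◁ c.σ B C ≫ c.σ A (C ⊗ B) ≫ (α_ C B A).hom =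
      c.σ A B ▷ C ≫ c.σ (B ⊗ A) C := by
  simpa only [id_tensorHom, tensorHom_id] using c.coboundary A B C

/-- The coboundary axiom for `(C, B, X)`, solved for `σ_{C,X⊗B}` using that `σ` is involutive. -/
lemma σ_tensor_comp_associator_comp_σ (B C X : V) :
    c.σ C (X ⊗ B) ≫ (α_ X B C).hom ≫ c.σ X (B ⊗ C) =
      C ◁ c.σ X B ≫ (α_ C B X).inv ≫ c.σ C B ▷ X := by
  calc _ = C ◁ c.σ X B ≫ (α_ C B X).inv ≫
        ((α_ C B X).hom ≫ C ◁ c.σ B X ≫ c.σ C (X ⊗ B) ≫ (α_ X B C).hom) ≫ c.σ X (B ⊗ C) := by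
        simp only [Category.assoc, Iso.inv_hom_id_assoc, ← whiskerLeft_comp_assoc, c.symmetry,
          whiskerLeft_id, Category.id_comp]
    _ = _ := by
        rw [c.coboundary_whisker]
        simp only [Category.assoc, c.symmetry, Category.comp_id]

lemma σ_tensor_comp_associator (B C X : V) :
    c.σ C (X ⊗ B) ≫ (α_ X B C).hom =
      C ◁ c.σ X B ≫ (α_ C B X).inv ≫ c.σ C B ▷ X ≫ c.σ (B ⊗ C) X := by
  rw [← reassoc_of% c.σ_tensor_comp_associator_comp_σ, c.symmetry, Category.comp_id]

lemma σ_comp_σ_tensor_comp_associator (B C X : V) :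
    c.σ (X ⊗ B) C ≫ C ◁ c.σ X B ≫ (α_ C B X).inv ≫ c.σ C B ▷ X =
      (α_ X B C).hom ≫ c.σ X (B ⊗ C) := by
  rw [← c.σ_tensor_comp_associator_comp_σ, c.σ_comp_σ_assoc]

end Commutor

lemma localRule_eq_whisker {V : Type u} [Category.{v} V] [MonoidalCategory V] (c : Commutor V)
    (A B C : V) : localRule c A B C = c.σ A B ▷ C ≫ (α_ B A C).hom ≫ c.σ B (A ⊗ C) := by
  rw [localRule, tensorHom_id]

/-- `τ^A_{B⊗C,D}` factors through `τ^{A⊗B}_{C,D}` and `τ^A_{B,D}`: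
`α_{A⊗D,B,C} ∘ (τ^A_{B,D} ⊗ 1_C) ∘ τ^{A⊗B}_{C,D} = τ^A_{B⊗C,D} ∘ (α_{A,B,C} ⊗ 1_D)`. -/
theorem localRule_tensor_middle {V : Type u} [Category.{v} V] [MonoidalCategory V]
    (c : Commutor V) (A B C D : V) :
    localRule c (A ⊗ B) C D ≫ (localRule c A B D ⊗ₘ 𝟙 C) ≫ (α_ (A ⊗ D) B C).hom =
      ((α_ A B C).hom ⊗ₘ 𝟙 D) ≫ localRule c A (B ⊗ C) D := by
  simp only [tensorHom_id]
  calc _ = c.σ (A ⊗ B) C ▷ D ≫ (α_ C (A ⊗ B) D).hom ≫ C ◁ (c.σ A B ▷ D ≫ (α_ B A D).hom) ≫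
        (α_ C B (A ⊗ D)).inv ≫ c.σ C B ▷ (A ⊗ D) ≫ c.σ (B ⊗ C) (A ⊗ D) := by
        simp only [localRule_eq_whisker, Category.assoc]
        rw [← reassoc_of% c.whiskerLeft_comp_σ, c.σ_tensor_comp_associator]
        simp only [← whiskerLeft_comp_assoc, Category.assoc, c.symmetry, Category.comp_id]
    _ = (c.σ (A ⊗ B) C ≫ C ◁ c.σ A B ≫ (α_ C B A).inv ≫ c.σ C B ▷ A) ▷ D ≫
        (α_ (B ⊗ C) A D).hom ≫ c.σ (B ⊗ C) (A ⊗ D) := by monoidal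
    _ = _ := by
        rw [c.σ_comp_σ_tensor_comp_associator, localRule_eq_whisker, comp_whiskerRight, Category.assoc]
end

section
/- Let C be a monoidal category equipped with a commutor σ, with local rules τ. For an object B define left-bracketed tensor powers by B^{⊗0} = I (the unit object) and B^{⊗(n+1)} = B^{⊗n} ⊗ B. For 0 ≤ k ≤ r let T_k be the endomorphism of B^{⊗(r+2)} obtained from τ^{B^{⊗k}}_{B,B} : (B^{⊗k}⊗B)⊗B ⟶ (B^{⊗k}⊗B)⊗B (an endomorphism of B^{⊗(k+2)}) by tensoring on the right with the identity of B a total of (r−k) times. Then for every r ≥ 0, the commutor σ_{B,B^{⊗(r+1)}} : B ⊗ B^{⊗(r+1)} ⟶ B^{⊗(r+2)} satisfies σ_{B,B^{⊗(r+1)}} ∘ γ = T_r ∘ T_{r−1} ∘ ⋯ ∘ T_1 ∘ T_0, where γ : B^{⊗(r+2)} ≅ B ⊗ B^{⊗(r+1)} is the canonical coherence isomorphism built from associators and unitors. -/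
open CategoryTheory MonoidalCategory

universe v u

variable {V : Type u} [Category.{v} V] [MonoidalCategory V]

/-- Left-bracketed tensor powers: `B^{⊗0} = I`, `B^{⊗(n+1)} = B^{⊗n} ⊗ B`. -/
def tpow (B : V) : ℕ → V
  | 0 => 𝟙_ V
  | n + 1 => tpow B n ⊗ B

/-- Tensor an endomorphism of `B^{⊗n}` on the right with `1_B`, `m` times,
giving an endomorphism of `B^{⊗(n+m)}`. -/
def padPow (B : V) : ∀ (n m : ℕ), (tpow B n ⟶ tpow B n) → (tpow B (n + m) ⟶ tpow B (n + m))
  | _, 0, f => f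
  | n, m + 1, f => padPow B n m f ⊗ₘ 𝟙 B

/-- The endomorphism `T_k` of `B^{⊗(r+2)}`: the local rule `τ^{B^{⊗k}}_{B,B}`
tensored on the right with `1_B` a total of `r - k` times. -/
def Tk (c : Commutor V) (B : V) (r k : ℕ) (h : k ≤ r) :
    tpow B (r + 2) ⟶ tpow B (r + 2) :=
  eqToHom (congrArg (tpow B) (by omega : r + 2 = (k + 2) + (r - k))) ≫
    padPow B (k + 2) (r - k) (localRule c (tpow B k) B B) ≫
      eqToHom (congrArg (tpow B) (by omega : (k + 2) + (r - k) = r + 2))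

/-- The composite `T_k ≫ T_{k-1} ≫ ⋯` in diagrammatic order:
`Tcomp c B r k = T_0 ≫ T_1 ≫ ⋯ ≫ T_k` (so applying `T_0` first). -/
def Tcomp (c : Commutor V) (B : V) (r : ℕ) : ∀ k, k ≤ r → (tpow B (r + 2) ⟶ tpow B (r + 2))
  | 0, _ => Tk c B r 0 (Nat.zero_le r)
  | k + 1, h => Tcomp c B r k (Nat.le_of_succ_le h) ≫ Tk c B r (k + 1) h

/-- The canonical coherence isomorphism `γ : B^{⊗(n+1)} ≅ B ⊗ B^{⊗n}`,
built from associators and unitors. -/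
def gam (B : V) : ∀ n : ℕ, tpow B (n + 1) ≅ B ⊗ tpow B n
  | 0 => λ_ B ≪≫ (ρ_ B).symm
  | n + 1 => whiskerRightIso (gam B n) B ≪≫ α_ B (tpow B n) B

/-! The factor `σ_{X,A} ▷ C` that opens `τ^X_{A,C}` is inverse to `σ_{A,X} ▷ C`, so
`α ≫ σ_{A, X ⊗ C} = (σ_{A,X} ▷ C) ≫ τ^X_{A,C}`. With `X = B^{⊗r}` this peels off the last
factor: `σ_{B, B^{⊗(r+1)}} ∘ γ` is `(σ_{B, B^{⊗r}} ∘ γ) ▷ B` followed by `τ^{B^{⊗r}}_{B,B} = T_r`,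
and induction on `r` finishes, starting from `σ_{B,I} ∘ γ = 1` by the unit axiom. -/

namespace Commutor

variable (c : Commutor V)

theorem whiskerRight_σ_comp_localRule (A X C : V) :
    c.σ A X ▷ C ≫ localRule c X A C = (α_ A X C).hom ≫ c.σ A (X ⊗ C) := by
  rw [localRule, tensorHom_id, ← comp_whiskerRight_assoc, c.symmetry, id_whiskerRight,
    Category.id_comp]

end Commutor

section LocalRules

variable (c : Commutor V) (B : V)

theorem gam_succ_hom (n : ℕ) :
    (gam B (n + 1)).hom = (gam B n).hom ▷ B ≫ (α_ B (tpow B n) B).hom :=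
  rfl

theorem padPow_succ (n m : ℕ) (f : tpow B n ⟶ tpow B n) :
    padPow B n (m + 1) f = padPow B n m f ▷ B :=
  tensorHom_id _ _

theorem gam_zero_hom_comp_σ : (gam B 0).hom ≫ c.σ B (tpow B 0) = 𝟙 _ := by
  simp [gam, tpow, c.unit_right]

theorem gam_succ_hom_comp_σ (n : ℕ) :
    (gam B (n + 1)).hom ≫ c.σ B (tpow B (n + 1)) =
      ((gam B n).hom ≫ c.σ B (tpow B n)) ▷ B ≫ localRule c (tpow B n) B B := by
  rw [comp_whiskerRight_assoc, c.whiskerRight_σ_comp_localRule, gam_succ_hom]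
  exact Category.assoc _ _ _

theorem Tk_eq_of_sub_eq {r k : ℕ} (h : k ≤ r) {m : ℕ} (hm : r - k = m) :
    Tk c B r k h =
      eqToHom (congrArg (tpow B) (by omega)) ≫ padPow B (k + 2) m (localRule c (tpow B k) B B) ≫
        eqToHom (congrArg (tpow B) (by omega)) := by
  subst hm
  rfl

theorem Tk_self (r : ℕ) : Tk c B r r le_rfl = localRule c (tpow B r) B B := by
  rw [Tk_eq_of_sub_eq c B le_rfl (Nat.sub_self r), eqToHom_refl]
  exact (Category.id_comp _).trans (Category.comp_id _)

theorem Tk_succ {r k : ℕ} (h : k ≤ r) :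
    Tk c B (r + 1) k (h.trans r.le_succ) = Tk c B r k h ▷ B := by
  rw [Tk_eq_of_sub_eq c B _ (Nat.succ_sub h), Tk]
  erw [comp_whiskerRight, comp_whiskerRight, eqToHom_whiskerRight, eqToHom_whiskerRight,
    padPow_succ]
  rfl

theorem Tcomp_succ (r : ℕ) :
    ∀ k (h : k ≤ r), Tcomp c B (r + 1) k (h.trans r.le_succ) = Tcomp c B r k h ▷ B
  | 0, h => Tk_succ c B h
  | k + 1, h => by
    rw [Tcomp, Tcomp, Tcomp_succ r k (Nat.le_of_succ_le h), Tk_succ c B h, comp_whiskerRight]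
    rfl

end LocalRules

/-- The commutor `σ_{B,B^{⊗(r+1)}}` is the composite of the local rules:
`σ_{B,B^{⊗(r+1)}} ∘ γ = T_r ∘ T_{r-1} ∘ ⋯ ∘ T_1 ∘ T_0`. -/
theorem commutor_eq_localRules (c : Commutor V) (B : V) (r : ℕ) :
    (gam B (r + 1)).hom ≫ c.σ B (tpow B (r + 1)) = Tcomp c B r r le_rfl := by
  induction r with
  | zero =>
    erw [gam_succ_hom_comp_σ, gam_zero_hom_comp_σ, id_whiskerRight, Category.id_comp]
    exact (Tk_self c B 0).symm
  | succ r ih =>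
    erw [gam_succ_hom_comp_σ, ih, ← Tcomp_succ, ← Tk_self]
    rfl
end

section
/- Let C be a monoidal category equipped with a commutor σ. Then for all objects A, B, C the following diagram commutes: starting at (C⊗B)⊗A, the composite (1_A ⊗ σ_{C,B}) ∘ σ_{C⊗B,A} : (C⊗B)⊗A ⟶ A⊗(B⊗C) equals the composite α_{A,B,C} ∘ (σ_{B,A} ⊗ 1_C) ∘ σ_{C,B⊗A} ∘ α_{C,B,A} : (C⊗B)⊗A ⟶ A⊗(B⊗C). -/
open CategoryTheory MonoidalCategory

universe v u

namespace Commutor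

variable {V : Type u} [Category.{v} V] [MonoidalCategory V] (c : Commutor V)

theorem σ_comp_tensor_id {X X' : V} (f : X ⟶ X') (Y : V) :
    c.σ X Y ≫ (𝟙 Y ⊗ₘ f) = (f ⊗ₘ 𝟙 Y) ≫ c.σ X' Y :=
  (c.naturality f (𝟙 Y)).symm

theorem id_tensor_comp_σ (X : V) {Y Y' : V} (g : Y ⟶ Y') :
    (𝟙 X ⊗ₘ g) ≫ c.σ X Y' = c.σ X Y ≫ (g ⊗ₘ 𝟙 X) :=
  c.naturality (𝟙 X) g

end Commutor

/-- The commuting diagram implied by the coboundary axioms: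
`(1_A ⊗ σ_{C,B}) ∘ σ_{C⊗B,A} = α_{A,B,C} ∘ (σ_{B,A} ⊗ 1_C) ∘ σ_{C,B⊗A} ∘ α_{C,B,A}`
as morphisms `(C⊗B)⊗A ⟶ A⊗(B⊗C)`. -/
theorem commutor_diagram {V : Type u} [Category.{v} V] [MonoidalCategory V]
    (c : Commutor V) (A B C : V) :
    c.σ (C ⊗ B) A ≫ (𝟙 A ⊗ₘ c.σ C B) =
      (α_ C B A).hom ≫ c.σ C (B ⊗ A) ≫ (c.σ B A ⊗ₘ 𝟙 C) ≫ (α_ A B C).hom :=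
  calc c.σ (C ⊗ B) A ≫ (𝟙 A ⊗ₘ c.σ C B)
      _ = (c.σ C B ⊗ₘ 𝟙 A) ≫ c.σ (B ⊗ C) A := c.σ_comp_tensor_id (c.σ C B) A
      _ = (α_ C B A).hom ≫ ((𝟙 C ⊗ₘ c.σ B A) ≫ c.σ C (A ⊗ B)) ≫ (α_ A B C).hom := by
        simpa only [Category.assoc] using (c.coboundary C B A).symm
      _ = (α_ C B A).hom ≫ c.σ C (B ⊗ A) ≫ (c.σ B A ⊗ₘ 𝟙 C) ≫ (α_ A B C).hom := by
        rw [c.id_tensor_comp_σ, Category.assoc]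
end

section
/- Let F be a field and q ∈ F a nonzero element with q + q⁻¹ ≠ 0. Let A be an associative unital F-algebra and u ∈ A an element satisfying u² = −(q + q⁻¹)·u. Set t = q·1 + u and s = q⁻¹·1 − ((q − q⁻¹)/(q + q⁻¹))·u. Then: (1) s² · t² = 1 and t² · s² = 1 (so s² is a two-sided inverse of t², i.e. s is an inverse square root of t²); (2) t·s = s·t = 1 + (2/(q + q⁻¹))·u; and (3) (t·s)² = 1, so t·s = 1 + (2/(q+q⁻¹))·u is an involution. -/
/-!
Everything happens in the commutative subalgebra spanned by `1` and `u`, where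
`(a + b u)(a' + b' u) = a a' + (a b' + b a' - b b' [2]) u`. With this rule `t s` and `s t` both
come out as `σ = 1 + (2/[2]) u`, and `σ² = 1 + (4/[2] - (4/[2]²)[2]) u = 1`. Since `t` and `s`
commute, `s² t² = (s t)² = σ² = 1` and likewise `t² s² = 1`.
-/

theorem algebraMap_add_mul_mul_algebraMap_add_mul {R A : Type*} [CommRing R] [Ring A]
    [Algebra R A] {u : A} {c : R} (hu : u * u = algebraMap R A c * u) (a b a' b' : R) :
    (algebraMap R A a + algebraMap R A b * u) * (algebraMap R A a' + algebraMap R A b' * u) =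
      algebraMap R A (a * a') + algebraMap R A (a * b' + b * a' + b * b' * c) * u := by
  simp only [Algebra.algebraMap_eq_smul_one] at hu ⊢
  simp only [add_mul, mul_add, smul_mul_assoc, mul_smul_comm, one_mul, mul_one, hu, smul_smul]
  module

theorem one_add_algebraMap_mul_sq_eq_one {R A : Type*} [CommRing R] [Ring A] [Algebra R A]
    {u : A} {c x : R} (hu : u * u = algebraMap R A c * u) (hx : x * c = -2) :
    (1 + algebraMap R A x * u) ^ 2 = 1 := by
  have hcoeff : 1 * x + x * 1 + x * x * c = 0 := by linear_combination x * hx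
  rw [sq, ← map_one (algebraMap R A), algebraMap_add_mul_mul_algebraMap_add_mul hu, hcoeff,
    map_zero, zero_mul, add_zero, one_mul]

/-- In any algebra with an element `u` satisfying the Hecke quadratic relation
`u² = -(q + q⁻¹) u`, the element `s = q⁻¹ - ((q - q⁻¹)/(q + q⁻¹)) u` is an inverse
square root of `t² = (q + u)²`, and `t s = s t = 1 + (2/(q + q⁻¹)) u` is an involution
(the cactus commutor `σ_{V,V} = t₁ (t₁²)^{-1/2}`). -/
theorem hecke_commutor_involution {F : Type*} [Field F] {A : Type*} [Ring A] [Algebra F A]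
    (q : F) (hq : q ≠ 0) (hq2 : q + q⁻¹ ≠ 0) (u : A)
    (hu : u * u = algebraMap F A (-(q + q⁻¹)) * u) :
    let t : A := algebraMap F A q + u
    let s : A := algebraMap F A q⁻¹ - algebraMap F A ((q - q⁻¹) / (q + q⁻¹)) * u
    (s ^ 2 * t ^ 2 = 1 ∧ t ^ 2 * s ^ 2 = 1) ∧
      (t * s = 1 + algebraMap F A (2 / (q + q⁻¹)) * u ∧
        s * t = 1 + algebraMap F A (2 / (q + q⁻¹)) * u) ∧
      (t * s) ^ 2 = 1 := by
  intro t s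
  set k := (q - q⁻¹) / (q + q⁻¹)
  set x := 2 / (q + q⁻¹)
  have hq_sq_add_one : q ^ 2 + 1 ≠ 0 := by
    have : q ^ 2 + 1 = q * (q + q⁻¹) := by field_simp
    exact this ▸ mul_ne_zero hq hq2
  have mul := algebraMap_add_mul_mul_algebraMap_add_mul hu
  have ht : t = algebraMap F A q + algebraMap F A 1 * u := by simp [t]
  have hs : s = algebraMap F A q⁻¹ + algebraMap F A (-k) * u := by
    simp only [s, k, map_neg, neg_mul, sub_eq_add_neg]
  have hσ : 1 + algebraMap F A x * u = algebraMap F A 1 + algebraMap F A x * u := by simp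
  have hts : t * s = 1 + algebraMap F A x * u := by
    rw [ht, hs, mul, hσ]
    congr 3
    · exact mul_inv_cancel₀ hq
    · simp only [k, x]; field_simp; ring
  have hst : s * t = 1 + algebraMap F A x * u := by
    rw [ht, hs, mul, hσ]
    congr 3
    · exact inv_mul_cancel₀ hq
    · simp only [k, x]; field_simp; ring
  have hσ_sq : (1 + algebraMap F A x * u) ^ 2 = 1 :=
    one_add_algebraMap_mul_sq_eq_one hu (by simp only [x]; field_simp)
  have hcomm : Commute t s := hts.trans hst.symm
  exact ⟨⟨by rw [← hcomm.symm.mul_pow, hst, hσ_sq], by rw [← hcomm.mul_pow, hts, hσ_sq]⟩,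
    ⟨hts, hst⟩, hts ▸ hσ_sq⟩
end
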